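/- Let p ∈ ℝ^J with p_j > 0 for all j, and let q ∈ ℝ^{I×J} with q_{ij} ≥ 0 for all i,j. Then the following are equivalent: (a) for every user i, the vector q_i = (q_{i1},…,q_{iJ}) maximizes r ↦ u_i(∑_{j=1}^J r_j c_{ij}) − ∑_{j=1}^J p_j r_j over nonnegative vectors r ∈ ℝ^J, and demand equals supply, i.e. ∑_{i=1}^I q_{ij} = Q_j for every j; (b) (q, p) is a KKT point of SWO. Moreover, in this case q is an optimal solution of SWO, and if additionally the channel offsets are generic, q is the unique optimal solution of SWO. -/

import Mathlib

/-!
Both directions of the equivalence are the first-order optimality condition for a concave payoff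
`u (∑ j, r j * c j) - ∑ j, p j * r j` over the nonnegative orthant: Fermat's rule along feasible
segments and the tangent-line inequality for concave `u` show that `q` is optimal iff
`∑ j, (u' c_j - p_j) (r_j - q_j) ≤ 0` for all `r ≥ 0`, i.e. iff `u' c_j ≤ p_j` with equality
wherever `q_j > 0`.

Given a KKT point, market clearing cancels the prices, so the welfare difference to a feasible `q'`
is a sum of tangent-line gaps `u_i(x'_i) - u_i(x_i) - u_i'(x_i) (x'_i - x_i)` and of terms
`(u_i' c_ij - p_j) q'_ij`, all nonpositive; hence `q` is optimal. If `q'` is optimal too, all these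
terms vanish. Strict concavity then forces `x' = x`, so `q' - q` has zero column sums and zero
`c`-weighted row sums, and its support contains an alternating cycle of distinct users and
providers. On that support `c_ij = p_j / u_i'`, so the offset-ratio product of the cycle
telescopes to `1`, which genericity forbids.
-/

/-- A demand matrix is feasible if it is componentwise nonnegative and the
demand to each provider equals its supply. -/
def Feasible {I J : ℕ} (Q : Fin J → ℝ) (q : Fin I → Fin J → ℝ) : Prop :=
  (∀ i j, 0 ≤ q i j) ∧ ∀ j, ∑ i, q i j = Q j

/-- The effective resource of user `i` under demand matrix `q`. -/
def effRes {I J : ℕ} (c q : Fin I → Fin J → ℝ) (i : Fin I) : ℝ :=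
  ∑ j, q i j * c i j

/-- The social welfare of a demand matrix. -/
def welfare {I J : ℕ} (u : Fin I → ℝ → ℝ) (c q : Fin I → Fin J → ℝ) : ℝ :=
  ∑ i, u i (effRes c q i)

/-- `(q, p)` is a KKT point of SWO. -/
def KKTPoint {I J : ℕ} (u : Fin I → ℝ → ℝ) (Q : Fin J → ℝ)
    (c q : Fin I → Fin J → ℝ) (p : Fin J → ℝ) : Prop :=
  Feasible Q q ∧ (∀ j, 0 < p j) ∧
  (∀ i j, deriv (u i) (effRes c q i) * c i j ≤ p j) ∧
  (∀ i j, q i j * (deriv (u i) (effRes c q i) * c i j - p j) = 0)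

/-- The channel quality offsets are generic: no cycle of distinct users and
distinct providers has offset-ratio product equal to one. -/
def Generic {I J : ℕ} (c : Fin I → Fin J → ℝ) : Prop :=
  ∀ (n : ℕ) (_hn : 2 ≤ n) (ii : Fin n → Fin I) (jj : Fin n → Fin J),
    Function.Injective ii → Function.Injective jj →
    ∏ k : Fin n, c (ii k) (jj (k - ⟨1, by omega⟩)) / c (ii k) (jj k) ≠ 1

open Set Function

noncomputable def tangentGap (f : ℝ → ℝ) (x y : ℝ) : ℝ :=
  f y - (f x + deriv f x * (y - x))

theorem ConcaveOn.tangentGap_nonpos {f : ℝ → ℝ} {S : Set ℝ} (hf : ConcaveOn ℝ S f)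
    {x y : ℝ} (hx : x ∈ S) (hy : y ∈ S) (hfx : DifferentiableAt ℝ f x) :
    tangentGap f x y ≤ 0 := by
  rw [tangentGap, sub_nonpos]
  rcases lt_trichotomy x y with hxy | rfl | hyx
  · have := hf.slope_le_deriv hx hy hxy hfx
    rw [slope_def_field, div_le_iff₀ (sub_pos.2 hxy)] at this
    linarith
  · simp
  · have := hf.deriv_le_slope hy hx hyx hfx
    rw [slope_def_field, le_div_iff₀ (sub_pos.2 hyx)] at this
    linarith

theorem StrictConcaveOn.tangentGap_neg {f : ℝ → ℝ} {S : Set ℝ} (hf : StrictConcaveOn ℝ S f)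
    {x y : ℝ} (hx : x ∈ S) (hy : y ∈ S) (hyx : y ≠ x) (hfx : DifferentiableAt ℝ f x) :
    tangentGap f x y < 0 := by
  rw [tangentGap, sub_neg]
  rcases hyx.lt_or_gt with hyx | hxy
  · have := hf.deriv_lt_slope hy hx hyx hfx
    rw [slope_def_field, lt_div_iff₀ (sub_pos.2 hyx)] at this
    linarith
  · have := hf.slope_lt_deriv hx hy hxy hfx
    rw [slope_def_field, div_lt_iff₀ (sub_pos.2 hxy)] at this
    linarith

theorem forall_sum_mul_sub_nonpos_iff {ι : Type*} [Fintype ι] [DecidableEq ι] {g q : ι → ℝ}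
    (hq : ∀ j, 0 ≤ q j) :
    (∀ r : ι → ℝ, (∀ j, 0 ≤ r j) → ∑ j, g j * (r j - q j) ≤ 0) ↔
      (∀ j, g j ≤ 0) ∧ ∀ j, q j * g j = 0 := by
  constructor
  · intro h
    have hg (j : ι) : g j ≤ 0 := by
      have := h (q + Pi.single j 1) fun k => add_nonneg (hq k) (by
        rcases eq_or_ne k j with rfl | hk <;> simp [*])
      simpa [Pi.single_apply] using this
    have hterm (j : ι) : q j * g j ≤ 0 := mul_nonpos_of_nonneg_of_nonpos (hq j) (hg j)
    have hsum : ∑ j, q j * g j = 0 := by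
      refine le_antisymm (Finset.sum_nonpos fun j _ => hterm j) ?_
      have := h 0 fun _ => le_rfl
      simp only [Pi.zero_apply, zero_sub, mul_neg, Finset.sum_neg_distrib, neg_nonpos] at this
      simpa only [mul_comm] using this
    exact ⟨hg, fun j => (Finset.sum_eq_zero_iff_of_nonpos fun j _ => hterm j).1 hsum j
      (Finset.mem_univ j)⟩
  · rintro ⟨hg, hslack⟩ r hr
    calc ∑ j, g j * (r j - q j) = ∑ j, g j * r j - ∑ j, q j * g j := by
          rw [← Finset.sum_sub_distrib]; exact Finset.sum_congr rfl fun j _ => by ring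
      _ ≤ 0 := by
          rw [Finset.sum_eq_zero fun j _ => hslack j, sub_zero]
          exact Finset.sum_nonpos fun j _ => mul_nonpos_of_nonpos_of_nonneg (hg j) (hr j)

theorem isMaxOn_comp_sub_iff {E : Type*} [NormedAddCommGroup E] [NormedSpace ℝ E]
    {u : ℝ → ℝ} (L P : StrongDual ℝ E) {s : Set E} (hs : Convex ℝ s) {x : E} (hx : x ∈ s)
    (hu : ConcaveOn ℝ univ u) (hux : DifferentiableAt ℝ u (L x)) :
    IsMaxOn (fun y => u (L y) - P y) s x ↔
      ∀ y ∈ s, deriv u (L x) * L (y - x) - P (y - x) ≤ 0 := by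
  constructor
  · intro hmax y hy
    have hderiv := (hux.hasDerivAt.hasFDerivAt.comp x L.hasFDerivAt).sub P.hasFDerivAt
    simpa [mul_comm] using hmax.localize.hasFDerivWithinAt_nonpos hderiv.hasFDerivWithinAt
      (sub_mem_posTangentConeAt_of_segment_subset (hs.segment_subset hx hy))
  · intro h y hy
    have := hu.tangentGap_nonpos (mem_univ (L x)) (mem_univ (L y)) hux
    have := h y hy
    simp only [tangentGap, map_sub] at *
    show u (L y) - P y ≤ u (L x) - P x
    linarith

noncomputable def weightedSumCLM {ι : Type*} [Fintype ι] (c : ι → ℝ) : StrongDual ℝ (ι → ℝ) :=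
  ∑ j, c j • ContinuousLinearMap.proj j

@[simp]
theorem weightedSumCLM_apply {ι : Type*} [Fintype ι] (c r : ι → ℝ) :
    weightedSumCLM c r = ∑ j, r j * c j := by
  simp [weightedSumCLM, mul_comm]

theorem forall_payoff_le_iff {ι : Type*} [Fintype ι] [DecidableEq ι] {u : ℝ → ℝ}
    (hu_conc : ConcaveOn ℝ univ u) (c p q : ι → ℝ) (hq : ∀ j, 0 ≤ q j)
    (hu_diff : DifferentiableAt ℝ u (∑ j, q j * c j)) :
    (∀ r : ι → ℝ, (∀ j, 0 ≤ r j) →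
        u (∑ j, r j * c j) - ∑ j, p j * r j ≤ u (∑ j, q j * c j) - ∑ j, p j * q j) ↔
      (∀ j, deriv u (∑ j, q j * c j) * c j ≤ p j) ∧
        ∀ j, q j * (deriv u (∑ j, q j * c j) * c j - p j) = 0 := by
  have hmax := isMaxOn_comp_sub_iff (weightedSumCLM c) (weightedSumCLM p) (convex_Ici 0)
    (show q ∈ Ici 0 from hq) hu_conc (by rwa [weightedSumCLM_apply])
  simp only [IsMaxOn, IsMaxFilter, Filter.eventually_principal, mem_Ici, Pi.le_def,
    Pi.zero_apply, weightedSumCLM_apply, Pi.sub_apply] at hmax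
  simp only [mul_comm (p _)]
  have hslack := forall_sum_mul_sub_nonpos_iff
    (g := fun j => deriv u (∑ j, q j * c j) * c j - p j) hq
  simp only [sub_nonpos] at hslack
  rw [hmax, ← hslack]
  refine forall₂_congr fun r _ => iff_of_eq (congrArg (· ≤ 0) ?_)
  rw [Finset.mul_sum, ← Finset.sum_sub_distrib]
  exact Finset.sum_congr rfl fun j _ => by ring

theorem injOn_Ico_of_ne_add {γ : Type*} {f : ℕ → γ} {d : ℕ}
    (h : ∀ a e, 0 < e → e < d → f a ≠ f (a + e)) (b : ℕ) : InjOn f (Ico b (b + d)) := by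
  intro x hx y hy hxy
  simp only [mem_Ico] at hx hy
  by_contra hne
  rcases Nat.lt_or_gt_of_ne hne with hlt | hlt
  · exact h x (y - x) (by omega) (by omega) (by rwa [Nat.add_sub_cancel' hlt.le])
  · exact h y (x - y) (by omega) (by omega) (by rwa [Nat.add_sub_cancel' hlt.le, eq_comm])

section AlternatingCycle

variable {α β : Type*} (E : α → β → Prop)

theorem exists_alternating_walk (hrow : ∀ i j, E i j → ∃ j', j' ≠ j ∧ E i j')
    (hcol : ∀ i j, E i j → ∃ i', i' ≠ i ∧ E i' j) {i₀ : α} {j₀ : β} (h₀ : E i₀ j₀) :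
    ∃ (ik : ℕ → α) (jk : ℕ → β), ∀ m, E (ik m) (jk m) ∧ E (ik (m + 1)) (jk m) ∧
      ik (m + 1) ≠ ik m ∧ jk (m + 1) ≠ jk m := by
  have hstep (e : {x : α × β // E x.1 x.2}) : ∃ e' : {x : α × β // E x.1 x.2},
      E e'.1.1 e.1.2 ∧ e'.1.1 ≠ e.1.1 ∧ e'.1.2 ≠ e.1.2 := by
    obtain ⟨⟨i, j⟩, h⟩ := e
    obtain ⟨i', hi', h'⟩ := hcol i j h
    obtain ⟨j', hj', h''⟩ := hrow i' j h'
    exact ⟨⟨(i', j'), h''⟩, h', hi', hj'⟩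
  choose next hnext using hstep
  let walk (m : ℕ) := next^[m] ⟨(i₀, j₀), h₀⟩
  refine ⟨fun m => (walk m).1.1, fun m => (walk m).1.2, fun m => ?_⟩
  have hsucc : walk (m + 1) = next (walk m) := Function.iterate_succ_apply' ..
  simp only [hsucc]
  exact ⟨(walk m).2, hnext (walk m)⟩

theorem exists_cycle_of_walk_segment {ik : ℕ → α} {jk : ℕ → β}
    (hdiag : ∀ m, E (ik m) (jk m)) (hsub : ∀ m, E (ik (m + 1)) (jk m)) {b n : ℕ} (hn : 2 ≤ n)
    (hik : InjOn ik (Ico b (b + n))) (hjk : InjOn jk (Ico b (b + n)))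
    (hclose : E (ik b) (jk (b + (n - 1)))) :
    ∃ (ii : Fin n → α) (jj : Fin n → β), Injective ii ∧ Injective jj ∧
      (∀ k, E (ii k) (jj k)) ∧ ∀ k, E (ii k) (jj (k - ⟨1, by omega⟩)) := by
  have hmem {k : ℕ} (hk : k < n) : b + k ∈ Ico b (b + n) := ⟨by omega, by omega⟩
  refine ⟨fun k => ik (b + k), fun k => jk (b + k), fun k k' h => ?_, fun k k' h => ?_,
    fun k => hdiag _, fun k => ?_⟩
  · exact Fin.ext (by have := hik (hmem k.2) (hmem k'.2) h; omega)
  · exact Fin.ext (by have := hjk (hmem k.2) (hmem k'.2) h; omega)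
  obtain ⟨m, rfl⟩ : ∃ m, n = m + 2 := ⟨n - 2, by omega⟩
  rw [show (⟨1, by omega⟩ : Fin (m + 2)) = 1 from rfl]
  dsimp only
  rw [Fin.coe_sub_one]
  split_ifs with hk
  · simpa [hk] using hclose
  · have hk : (k : ℕ) ≠ 0 := Fin.val_ne_zero_iff.2 hk
    simpa [show b + (k - 1) + 1 = b + k by omega] using hsub (b + (k - 1))

theorem exists_alternating_cycle [Finite α] (hrow : ∀ i j, E i j → ∃ j', j' ≠ j ∧ E i j')
    (hcol : ∀ i j, E i j → ∃ i', i' ≠ i ∧ E i' j) {i₀ : α} {j₀ : β} (h₀ : E i₀ j₀) :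
    ∃ (n : ℕ) (hn : 2 ≤ n) (ii : Fin n → α) (jj : Fin n → β), Injective ii ∧ Injective jj ∧
      (∀ k, E (ii k) (jj k)) ∧ ∀ k, E (ii k) (jj (k - ⟨1, by omega⟩)) := by
  classical
  obtain ⟨ik, jk, hwalk⟩ := exists_alternating_walk E hrow hcol h₀
  have hrepeat : ∃ d, 0 < d ∧ ∃ s, ik s = ik (s + d) ∨ jk s = jk (s + d) := by
    obtain ⟨x, y, hxy, h⟩ := Finite.exists_ne_map_eq_of_infinite ik
    rcases Nat.lt_or_gt_of_ne hxy with hlt | hlt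
    · exact ⟨y - x, by omega, x, Or.inl (by rwa [Nat.add_sub_cancel' hlt.le])⟩
    · exact ⟨x - y, by omega, y, Or.inl (by rwa [Nat.add_sub_cancel' hlt.le, eq_comm])⟩
  -- A shortest repeat gap `d` makes every window of length `d` repeat-free.
  obtain ⟨hd, s, hs⟩ := Nat.find_spec hrepeat
  set d := Nat.find hrepeat
  have hnorep (a e : ℕ) (he : 0 < e) (hed : e < d) : ik a ≠ ik (a + e) ∧ jk a ≠ jk (a + e) :=
    ⟨fun h => Nat.find_min hrepeat hed ⟨he, a, .inl h⟩,
      fun h => Nat.find_min hrepeat hed ⟨he, a, .inr h⟩⟩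
  have hd2 : 2 ≤ d := by
    by_contra hlt
    have hd1 : d = 1 := by omega
    rw [hd1] at hs
    rcases hs with h | h
    · exact (hwalk s).2.2.1 h.symm
    · exact (hwalk s).2.2.2 h.symm
  have hik := injOn_Ico_of_ne_add fun a e he hed => (hnorep a e he hed).1
  have hjk := injOn_Ico_of_ne_add fun a e he hed => (hnorep a e he hed).2
  have hcycle (b : ℕ) := exists_cycle_of_walk_segment E (fun m => (hwalk m).1)
    (fun m => (hwalk m).2.1) hd2 (hik b) (hjk b)
  rcases hs with h | h
  · refine ⟨d, hd2, hcycle s ?_⟩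
    have := (hwalk (s + (d - 1))).2.1
    rwa [show s + (d - 1) + 1 = s + d by omega, ← h] at this
  · refine ⟨d, hd2, hcycle (s + 1) ?_⟩
    rw [show s + 1 + (d - 1) = s + d by omega, ← h]
    exact (hwalk s).2.1

end AlternatingCycle

theorem exists_ne_ne_zero_of_sum_eq_zero {ι M : Type*} [Fintype ι] [AddCommMonoid M]
    {f : ι → M} (hsum : ∑ i, f i = 0) {i : ι} (hi : f i ≠ 0) : ∃ i', i' ≠ i ∧ f i' ≠ 0 := by
  by_contra! h
  rw [Fintype.sum_eq_single i h] at hsum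
  exact hi hsum

theorem prod_div_eq_one_of_cycle {α β : Type*} {n : ℕ} (hn : 2 ≤ n) {ii : Fin n → α}
    {jj : Fin n → β} {c : α → β → ℝ} {a : α → ℝ} {p : β → ℝ} (hp : ∀ j, p j ≠ 0)
    (hdiag : ∀ k, a (ii k) * c (ii k) (jj k) = p (jj k))
    (hsub : ∀ k, a (ii k) * c (ii k) (jj (k - ⟨1, by omega⟩)) = p (jj (k - ⟨1, by omega⟩))) :
    ∏ k, c (ii k) (jj (k - ⟨1, by omega⟩)) / c (ii k) (jj k) = 1 := by
  have : NeZero n := ⟨by omega⟩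
  have ha (k : Fin n) : a (ii k) ≠ 0 := left_ne_zero_of_mul ((hdiag k).symm ▸ hp (jj k))
  have hratio (k : Fin n) : c (ii k) (jj (k - ⟨1, by omega⟩)) / c (ii k) (jj k) =
      p (jj (k - ⟨1, by omega⟩)) / p (jj k) := by
    rw [← hdiag k, ← hsub k, mul_div_mul_left _ _ (ha k)]
  have hshift : ∏ k, p (jj (k - ⟨1, by omega⟩)) = ∏ k, p (jj k) :=
    Fintype.prod_equiv (Equiv.subRight ⟨1, by omega⟩) _ _ fun _ => rfl
  rw [Finset.prod_congr rfl fun k _ => hratio k, Finset.prod_div_distrib, hshift,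
    div_self (Finset.prod_ne_zero_iff.2 fun k _ => hp _)]

section KKTPoint

variable {I J : ℕ} {u : Fin I → ℝ → ℝ} {Q : Fin J → ℝ} {c q q' : Fin I → Fin J → ℝ}
  {p : Fin J → ℝ}

theorem KKTPoint.welfare_sub_welfare (hK : KKTPoint u Q c q p) (hq' : Feasible Q q') :
    welfare u c q' - welfare u c q =
      ∑ i, tangentGap (u i) (effRes c q i) (effRes c q' i) +
        ∑ i, ∑ j, (deriv (u i) (effRes c q i) * c i j - p j) * q' i j := by
  obtain ⟨⟨-, hQ⟩, -, -, hslack⟩ := hK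
  have hprice : ∑ i, ∑ j, p j * (q' i j - q i j) = 0 := by
    rw [Finset.sum_comm]
    refine Finset.sum_eq_zero fun j _ => ?_
    rw [← Finset.mul_sum, Finset.sum_sub_distrib, hq'.2 j, hQ j, sub_self, mul_zero]
  have hlin : ∑ i, deriv (u i) (effRes c q i) * (effRes c q' i - effRes c q i) =
      ∑ i, ∑ j, (deriv (u i) (effRes c q i) * c i j - p j) * q' i j := by
    calc _ = ∑ i, ∑ j, ((deriv (u i) (effRes c q i) * c i j - p j) * q' i j -
            q i j * (deriv (u i) (effRes c q i) * c i j - p j) + p j * (q' i j - q i j)) := by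
          refine Finset.sum_congr rfl fun i _ => ?_
          simp only [effRes, ← Finset.sum_sub_distrib, Finset.mul_sum]
          exact Finset.sum_congr rfl fun j _ => by ring
      _ = _ := by
          simp only [hslack, sub_zero, Finset.sum_add_distrib, hprice, add_zero]
  rw [← hlin, welfare, welfare, ← Finset.sum_sub_distrib, ← Finset.sum_add_distrib]
  exact Finset.sum_congr rfl fun i _ => by rw [tangentGap]; ring

theorem KKTPoint.dual_term_nonpos (hK : KKTPoint u Q c q p) (hq' : Feasible Q q') (i : Fin I)
    (j : Fin J) : (deriv (u i) (effRes c q i) * c i j - p j) * q' i j ≤ 0 :=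
  mul_nonpos_of_nonpos_of_nonneg (sub_nonpos.2 (hK.2.2.1 i j)) (hq'.1 i j)

theorem KKTPoint.welfare_le (hu_diff : ∀ i, Differentiable ℝ (u i))
    (hu_conc : ∀ i, ConcaveOn ℝ univ (u i)) (hK : KKTPoint u Q c q p) (hq' : Feasible Q q') :
    welfare u c q' ≤ welfare u c q := by
  have hgap (i : Fin I) := (hu_conc i).tangentGap_nonpos (mem_univ (effRes c q i))
    (mem_univ (effRes c q' i)) (hu_diff i _)
  linarith [hK.welfare_sub_welfare hq', Fintype.sum_nonpos hgap,
    Fintype.sum_nonpos fun i => Fintype.sum_nonpos (hK.dual_term_nonpos hq' i)]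

theorem KKTPoint.effRes_eq_and_slack (hu_diff : ∀ i, Differentiable ℝ (u i))
    (hu_conc : ∀ i, StrictConcaveOn ℝ univ (u i)) (hK : KKTPoint u Q c q p)
    (hq' : Feasible Q q') (hle : welfare u c q ≤ welfare u c q') :
    (∀ i, effRes c q' i = effRes c q i) ∧
      ∀ i j, (deriv (u i) (effRes c q i) * c i j - p j) * q' i j = 0 := by
  have hgap (i : Fin I) := (hu_conc i).concaveOn.tangentGap_nonpos (mem_univ (effRes c q i))
    (mem_univ (effRes c q' i)) (hu_diff i _)
  have hdual (i : Fin I) := Fintype.sum_nonpos (hK.dual_term_nonpos hq' i)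
  have hsum := hK.welfare_sub_welfare hq'
  have hgap0 := (Fintype.sum_eq_zero_iff_of_nonpos hgap).1
    (by linarith [Fintype.sum_nonpos hgap, Fintype.sum_nonpos hdual])
  have hdual0 := (Fintype.sum_eq_zero_iff_of_nonpos hdual).1
    (by linarith [Fintype.sum_nonpos hgap, Fintype.sum_nonpos hdual])
  refine ⟨fun i => ?_, fun i => congrFun
    ((Fintype.sum_eq_zero_iff_of_nonpos (hK.dual_term_nonpos hq' i)).1 (congrFun hdual0 i))⟩
  by_contra hne
  exact ((hu_conc i).tangentGap_neg (mem_univ _) (mem_univ _) hne (hu_diff i _)).ne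
    (congrFun hgap0 i)

theorem KKTPoint.price_eq_of_ne (hK : KKTPoint u Q c q p)
    (hslack' : ∀ i j, (deriv (u i) (effRes c q i) * c i j - p j) * q' i j = 0) {i : Fin I}
    {j : Fin J} (hne : q' i j ≠ q i j) : deriv (u i) (effRes c q i) * c i j = p j := by
  by_cases hq0 : q i j = 0
  · exact sub_eq_zero.1 ((mul_eq_zero.1 (hslack' i j)).resolve_right (hq0 ▸ hne))
  · exact sub_eq_zero.1 ((mul_eq_zero.1 (hK.2.2.2 i j)).resolve_left hq0)

theorem KKTPoint.eq_of_welfare_le (hu_diff : ∀ i, Differentiable ℝ (u i))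
    (hu_conc : ∀ i, StrictConcaveOn ℝ univ (u i)) (hc : ∀ i j, 0 < c i j) (hgen : Generic c)
    (hK : KKTPoint u Q c q p) (hq' : Feasible Q q') (hle : welfare u c q ≤ welfare u c q') :
    q' = q := by
  obtain ⟨hx, hslack'⟩ := hK.effRes_eq_and_slack hu_diff hu_conc hq' hle
  by_contra hne
  obtain ⟨i₀, j₀, h₀⟩ : ∃ i j, q' i j ≠ q i j := by
    by_contra! h
    exact hne (funext fun i => funext (h i))
  have hrow (i : Fin I) (j : Fin J) (h : q' i j ≠ q i j) : ∃ j', j' ≠ j ∧ q' i j' ≠ q i j' := by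
    have hsum : ∑ j, (q' i j - q i j) * c i j = 0 := by
      simp only [sub_mul, Finset.sum_sub_distrib]
      exact sub_eq_zero.2 (hx i)
    obtain ⟨j', hj', h'⟩ := exists_ne_ne_zero_of_sum_eq_zero hsum
      (mul_ne_zero (sub_ne_zero.2 h) (hc i j).ne')
    exact ⟨j', hj', sub_ne_zero.1 (left_ne_zero_of_mul h')⟩
  have hcol (i : Fin I) (j : Fin J) (h : q' i j ≠ q i j) : ∃ i', i' ≠ i ∧ q' i' j ≠ q i' j := by
    have hsum : ∑ i, (q' i j - q i j) = 0 := by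
      rw [Finset.sum_sub_distrib, hq'.2 j, hK.1.2 j, sub_self]
    obtain ⟨i', hi', h'⟩ := exists_ne_ne_zero_of_sum_eq_zero hsum (sub_ne_zero.2 h)
    exact ⟨i', hi', sub_ne_zero.1 h'⟩
  obtain ⟨n, hn, ii, jj, hii, hjj, hdiag, hsub⟩ :=
    exists_alternating_cycle (fun i j => q' i j ≠ q i j) hrow hcol h₀
  exact hgen n hn ii jj hii hjj <| prod_div_eq_one_of_cycle hn
    (a := fun i => deriv (u i) (effRes c q i)) (fun j => (hK.2.1 j).ne')
    (fun k => hK.price_eq_of_ne hslack' (hdiag k)) fun k => hK.price_eq_of_ne hslack' (hsub k)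

end KKTPoint

theorem user_optimality_and_market_clearing_iff_kkt_general
    (I J : ℕ)
    (u : Fin I → ℝ → ℝ)
    (hu_diff : ∀ i, Differentiable ℝ (u i))
    (hu_conc : ∀ i, StrictConcaveOn ℝ Set.univ (u i))
    (Q : Fin J → ℝ)
    (c : Fin I → Fin J → ℝ) (hc : ∀ i j, 0 < c i j)
    (p : Fin J → ℝ) (hp : ∀ j, 0 < p j)
    (q : Fin I → Fin J → ℝ) (hq : ∀ i j, 0 ≤ q i j) :
    (((∀ i : Fin I, ∀ r : Fin J → ℝ, (∀ j, 0 ≤ r j) →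
        u i (∑ j, r j * c i j) - ∑ j, p j * r j ≤
          u i (∑ j, q i j * c i j) - ∑ j, p j * q i j) ∧
      (∀ j, ∑ i, q i j = Q j)) ↔ KKTPoint u Q c q p) ∧
    (KKTPoint u Q c q p →
      (Feasible Q q ∧
        ∀ q' : Fin I → Fin J → ℝ, Feasible Q q' → welfare u c q' ≤ welfare u c q) ∧
      (Generic c →
        ∀ q' : Fin I → Fin J → ℝ, Feasible Q q' →
          (∀ r : Fin I → Fin J → ℝ, Feasible Q r → welfare u c r ≤ welfare u c q') →
          q' = q)) := by
  have huser (i : Fin I) :=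
    forall_payoff_le_iff (hu_conc i).concaveOn (c i) p (q i) (hq i) (hu_diff i _)
  refine ⟨?_, fun hK => ⟨⟨hK.1, fun q' hq' =>
      hK.welfare_le hu_diff (fun i => (hu_conc i).concaveOn) hq'⟩,
    fun hgen q' hq' hopt => hK.eq_of_welfare_le hu_diff hu_conc hc hgen hq' (hopt q hK.1)⟩⟩
  simp only [huser, forall_and, KKTPoint, Feasible, effRes]
  tauto

/-- For nonnegative `q` and positive prices `p`:
every user's demand maximizes its payoff and demand equals supply iff
`(q, p)` is a KKT point of SWO; moreover, in this case `q` is an optimal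
solution of SWO, and if the channel offsets are generic it is the unique
optimal solution. -/
theorem user_optimality_and_market_clearing_iff_kkt
    (I J : ℕ) (hI : 0 < I) (hJ : 0 < J)
    (u : Fin I → ℝ → ℝ)
    (hu_diff : ∀ i, Differentiable ℝ (u i))
    (hu_mono : ∀ i, StrictMono (u i))
    (hu_conc : ∀ i, StrictConcaveOn ℝ Set.univ (u i))
    (Q : Fin J → ℝ) (hQ : ∀ j, 0 < Q j)
    (c : Fin I → Fin J → ℝ) (hc : ∀ i j, 0 < c i j)
    (p : Fin J → ℝ) (hp : ∀ j, 0 < p j)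
    (q : Fin I → Fin J → ℝ) (hq : ∀ i j, 0 ≤ q i j) :
    (((∀ i : Fin I, ∀ r : Fin J → ℝ, (∀ j, 0 ≤ r j) →
        u i (∑ j, r j * c i j) - ∑ j, p j * r j ≤
          u i (∑ j, q i j * c i j) - ∑ j, p j * q i j) ∧
      (∀ j, ∑ i, q i j = Q j)) ↔ KKTPoint u Q c q p) ∧
    (KKTPoint u Q c q p →
      (Feasible Q q ∧
        ∀ q' : Fin I → Fin J → ℝ, Feasible Q q' → welfare u c q' ≤ welfare u c q) ∧
      (Generic c →
        ∀ q' : Fin I → Fin J → ℝ, Feasible Q q' →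
          (∀ r : Fin I → Fin J → ℝ, Feasible Q r → welfare u c r ≤ welfare u c q') →
          q' = q)) :=
  user_optimality_and_market_clearing_iff_kkt_general I J u hu_diff hu_conc Q c hc p hp q hq
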